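/- The charge coproduct Δ^α on H^α is coassociative, and H^α with Δ^α, the counit ε (sending ∥ to 1 and every other tree to 0), and the recursively defined antipode S(t) = −t − Σ S(t_{(1)})/t_{(2)} (sum over the reduced coproduct) is a graded connected commutative Hopf algebra. -/

import Mathlib

open TensorProduct

inductive PBT : Type
  | leaf : PBT
  | node : PBT → PBT → PBT
deriving DecidableEq

namespace PBT

def order : PBT → ℕ
  | leaf => 0
  | node l r => order l + order r + 1

def overT : PBT → PBT → PBT
  | t, leaf => t
  | t, node l r => node (overT t l) r

def under : PBT → PBT → PBT
  | leaf, s => s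
  | node l r, s => node l (under r s)

theorem over_assoc (a b c : PBT) : overT (overT a b) c = overT a (overT b c) := by
  induction c with
  | leaf => rfl
  | node l r ihl ihr => simp only [overT, ihl]

theorem over_one (a : PBT) : overT leaf a = a := by
  induction a with
  | leaf => rfl
  | node l r ihl ihr => simp only [overT, ihl]

/-- The monoid of planar binary trees under the `over` product, with unit the root tree. -/
instance : Monoid PBT where
  mul := overT
  one := leaf
  mul_assoc := over_assoc
  one_mul := over_one
  mul_one _ := rfl

/-- The list of generators of a tree in the free monoid (Y, /):
t = V(s₁) / ⋯ / V(sₙ) corresponds to the multiset {s₁, …, sₙ} in the abelianization. -/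
def gens : PBT → Multiset PBT
  | leaf => 0
  | node l r => gens l + {r}

def encode : PBT → ℕ
  | leaf => 0
  | node l r => Nat.pair (encode l) (encode r) + 1

theorem encode_injective : Function.Injective encode := by
  intro a
  induction a with
  | leaf =>
    intro b h
    cases b with
    | leaf => rfl
    | node l r => simp [encode] at h
  | node l r ihl ihr =>
    intro b h
    cases b with
    | leaf => simp [encode] at h
    | node l' r' =>
      simp only [encode, Nat.add_right_cancel_iff] at h
      obtain ⟨h1, h2⟩ := Nat.pair_eq_pair.mp h
      exact congrArg₂ PBT.node (ihl h1) (ihr h2)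

noncomputable instance : LinearOrder PBT := LinearOrder.lift' encode encode_injective

end PBT

open PBT TensorProduct

/-- The non-commutative charge algebra H̃^α = (ℂY, /): the monoid algebra of the monoid
of planar binary trees under the `over` product. -/
noncomputable abbrev Htilde : Type := MonoidAlgebra ℂ PBT

/-- A generator V(t) = ∥ ∨ t, as an element of H̃^α. -/
noncomputable def Vgen (t : PBT) : Htilde := MonoidAlgebra.single (PBT.node PBT.leaf t) 1

/-- The linear map V ⊗ Id used in the recursion δ(V(t)) = (V ⊗ Id)δ(t). -/
noncomputable def VhatT : (Htilde ⊗[ℂ] Htilde) →ₗ[ℂ] (Htilde ⊗[ℂ] Htilde) :=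
  TensorProduct.map (MonoidAlgebra.mapDomainLinearMap ℂ ℂ (fun t => PBT.node PBT.leaf t)) LinearMap.id

/-- The pair (Δ^α(t), δ(t)) of the charge coproduct and the charge coaction on a tree,
defined by the mutual recursion
Δ^α(∥) = ∥ ⊗ ∥,  Δ^α(t ∨ s) = Δ^α(t) · (∥ ⊗ V(s) + δ(V(s))),
δ(∥) = ∥ ⊗ ∥,   δ(t ∨ s) = Δ^α(t) · (V ⊗ Id)(δ(s)),
(so that Δ^α(V(s)) = ∥ ⊗ V(s) + δ(V(s)) and δ(V(s)) = (V ⊗ Id)δ(s)). -/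
noncomputable def Ddt : PBT → (Htilde ⊗[ℂ] Htilde) × (Htilde ⊗[ℂ] Htilde)
  | .leaf => (1, 1)
  | .node t s =>
      ((Ddt t).1 * ((1 : Htilde) ⊗ₜ[ℂ] Vgen s + VhatT (Ddt s).2),
       (Ddt t).1 * VhatT (Ddt s).2)

/-- The charge algebra H^α = ℂ[V(t), t ∈ Y], the commutative polynomial algebra on the
generators V(t), i.e. the abelianization of (ℂY, /): its basis consists of the
(commutative) monomials in the generators, i.e. multisets of trees. -/
noncomputable abbrev Halpha : Type := AddMonoidAlgebra ℂ (Multiset PBT)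

/-- The abelianization map ℂY → H^α, sending a tree t = V(s₁)/⋯/V(sₙ) to the
commutative monomial V(s₁)⋯V(sₙ). -/
noncomputable def piAb : Htilde →ₗ[ℂ] Halpha :=
  Finsupp.lift Halpha ℂ PBT (fun t => AddMonoidAlgebra.single (gens t) 1) ∘ₗ
    (MonoidAlgebra.coeffLinearEquiv ℂ).toLinearMap

/-- The charge coproduct on a generator V(t) of H^α, pushed forward from the
tree-level recursion. -/
noncomputable def chargeGen (t : PBT) : Halpha ⊗[ℂ] Halpha :=
  (TensorProduct.map piAb piAb) (Ddt (PBT.node PBT.leaf t)).1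

/-- The multiplicative extension of the charge coproduct to monomials, as a monoid
homomorphism from the (multiplicative) free commutative monoid of monomials. -/
noncomputable def chargeMon : Multiplicative (Multiset PBT) →* (Halpha ⊗[ℂ] Halpha) where
  toFun m := ((Multiplicative.toAdd m).map chargeGen).prod
  map_one' := by simp
  map_mul' x y := by
    show ((Multiplicative.toAdd x + Multiplicative.toAdd y).map chargeGen).prod = _
    simp [Multiset.prod_add]

/-- The charge coproduct Δ^α : H^α → H^α ⊗ H^α, as the algebra morphism determined by
its values on the generators V(t). -/
noncomputable def chargeComul : Halpha →ₐ[ℂ] (Halpha ⊗[ℂ] Halpha) :=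
  (AddMonoidAlgebra.lift ℂ (Halpha ⊗[ℂ] Halpha) (Multiset PBT)) chargeMon

/-- The canonical tree representative of a monomial: the product, in increasing order,
of the generators V(u) for u in the multiset. -/
noncomputable def canonTree (m : Multiset PBT) : PBT :=
  (m.sort (· ≤ ·)).foldr (fun u acc => overT (PBT.node PBT.leaf u) acc) PBT.leaf

/-- The charge coaction δ : H^α → H^α ⊗ H^α, defined on the basis of monomials through
the tree-level recursion (using the canonical tree representative of a monomial). -/
noncomputable def chargeCoaction : Halpha →ₗ[ℂ] (Halpha ⊗[ℂ] Halpha) :=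
  Finsupp.lift (Halpha ⊗[ℂ] Halpha) ℂ (Multiset PBT)
    (fun m => (TensorProduct.map piAb piAb) (Ddt (canonTree m)).2) ∘ₗ
    (AddMonoidAlgebra.coeffLinearEquiv ℂ).toLinearMap

/-- The counit of H^α: sends the empty monomial (the root tree ∥) to 1 and every other
monomial to 0. -/
noncomputable def chargeCounit : Halpha →ₗ[ℂ] ℂ :=
  Finsupp.lift ℂ ℂ (Multiset PBT) (fun m => if m = 0 then 1 else 0) ∘ₗ
    (AddMonoidAlgebra.coeffLinearEquiv ℂ).toLinearMap

/-- The degree of a monomial: V(t) has degree |t| + 1. -/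
def degMon (m : Multiset PBT) : ℕ := (m.map (fun t => t.order + 1)).sum

namespace ChargeHopf

theorem MA_lhom_ext {M N : Type*} [AddCommMonoid N] [Module ℂ N]
    ⦃φ ψ : MonoidAlgebra ℂ M →ₗ[ℂ] N⦄
    (h : ∀ a b, φ (MonoidAlgebra.single a b) = ψ (MonoidAlgebra.single a b)) : φ = ψ :=
  MonoidAlgebra.lhom_ext' fun a => LinearMap.ext fun b => h a b

theorem AMA_lhom_ext {M N : Type*} [AddCommMonoid N] [Module ℂ N]
    ⦃φ ψ : AddMonoidAlgebra ℂ M →ₗ[ℂ] N⦄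
    (h : ∀ a b, φ (AddMonoidAlgebra.single a b) = ψ (AddMonoidAlgebra.single a b)) : φ = ψ :=
  AddMonoidAlgebra.lhom_ext' fun a => LinearMap.ext fun b => h a b

open PBT AddMonoidAlgebra

theorem gens_over (a b : PBT) : gens (overT a b) = gens a + gens b := by
  induction b with
  | leaf => simp [overT, gens]
  | node l r ihl ihr => simp [overT, gens, ihl, add_assoc]

theorem order_over (a b : PBT) : order (overT a b) = order a + order b := by
  induction b with
  | leaf => simp [overT, order]
  | node l r ihl ihr => simp [overT, order, ihl]; ring

theorem gens_eq_zero_iff {t : PBT} : gens t = 0 ↔ t = leaf := by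
  cases t with
  | leaf => simp [gens]
  | node l r => simp [gens]

theorem degMon_gens (t : PBT) : degMon (gens t) = order t := by
  induction t with
  | leaf => rfl
  | node l r ihl ihr => simp [gens, degMon, order] at *; omega

theorem degMon_add (a b : Multiset PBT) : degMon (a + b) = degMon a + degMon b := by
  simp [degMon]

theorem degMon_eq_zero {m : Multiset PBT} (h : degMon m = 0) : m = 0 := by
  unfold degMon at h
  rw [Multiset.sum_eq_zero_iff] at h
  by_contra hm
  obtain ⟨t, ht⟩ := Multiset.exists_mem_of_ne_zero hm
  exact Nat.succ_ne_zero t.order (h _ (Multiset.mem_map_of_mem _ ht))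

theorem gens_canonTree (m : Multiset PBT) : gens (canonTree m) = m := by
  unfold canonTree
  have h : ∀ l : List PBT, gens (l.foldr (fun u acc => overT (PBT.node PBT.leaf u) acc) PBT.leaf) = (l : Multiset PBT) := by
    intro l
    induction l with
    | nil => rfl
    | cons x xs ih =>
      simp only [List.foldr, gens_over, ih, gens, zero_add]
      rw [Multiset.singleton_add, Multiset.cons_coe]
  rw [h, Multiset.sort_eq]

-- multiplicativity of Δ at tree level
theorem ddt1_over (a b : PBT) : (Ddt (overT a b)).1 = (Ddt a).1 * (Ddt b).1 := by
  induction b with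
  | leaf => simp [overT, Ddt]
  | node l r ihl ihr =>
    show (Ddt (node (overT a l) r)).1 = _
    rw [Ddt, Ddt, ihl]
    simp [mul_assoc]

/-- Δ as a monoid hom on trees. -/
noncomputable def Dm : PBT →* (Htilde ⊗[ℂ] Htilde) where
  toFun t := (Ddt t).1
  map_one' := rfl
  map_mul' a b := ddt1_over a b

/-- Δ as an algebra hom on H̃. -/
noncomputable def DlA : Htilde →ₐ[ℂ] (Htilde ⊗[ℂ] Htilde) :=
  MonoidAlgebra.lift ℂ _ PBT Dm

theorem DlA_single (t : PBT) (c : ℂ) :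
    DlA (MonoidAlgebra.single t c) = c • (Ddt t).1 := by
  simp [DlA, MonoidAlgebra.lift_single, Dm, MonoidHom.coe_mk, OneHom.coe_mk]
  rfl

/-- δ as a linear map on H̃. -/
noncomputable def dl : Htilde →ₗ[ℂ] (Htilde ⊗[ℂ] Htilde) :=
  Finsupp.lift _ ℂ PBT (fun t => (Ddt t).2) ∘ₗ (MonoidAlgebra.coeffLinearEquiv ℂ).toLinearMap

theorem dl_single (t : PBT) (c : ℂ) :
    dl (MonoidAlgebra.single t c) = c • (Ddt t).2 := by
  rw [dl, LinearMap.comp_apply, LinearEquiv.coe_coe, MonoidAlgebra.coeffLinearEquiv_apply, MonoidAlgebra.coeff_single]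
  erw [Finsupp.lift_apply, Finsupp.sum_single_index (by simp)]

/-- the abelianization as a monoid hom. -/
noncomputable def gm : PBT →* Halpha where
  toFun t := AddMonoidAlgebra.single (gens t) 1
  map_one' := rfl
  map_mul' a b := by
    show AddMonoidAlgebra.single (gens (overT a b)) 1 = _
    rw [gens_over, AddMonoidAlgebra.single_mul_single, one_mul]

noncomputable def piAbA : Htilde →ₐ[ℂ] Halpha :=
  MonoidAlgebra.lift ℂ _ PBT gm

theorem piAbA_single (t : PBT) (c : ℂ) :
    piAbA (MonoidAlgebra.single t c) = AddMonoidAlgebra.single (gens t) c := by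
  simp [piAbA, MonoidAlgebra.lift_single, gm, MonoidHom.coe_mk, OneHom.coe_mk, AddMonoidAlgebra.smul_single']
  show c • AddMonoidAlgebra.single (gens t) 1 = _
  rw [AddMonoidAlgebra.smul_single', mul_one]

theorem piAb_eq : piAb = piAbA.toLinearMap := by
  apply MA_lhom_ext
  intro a b
  show piAb (MonoidAlgebra.single a b) = piAbA (MonoidAlgebra.single a b)
  rw [piAbA_single, piAb, LinearMap.comp_apply, LinearEquiv.coe_coe, MonoidAlgebra.coeffLinearEquiv_apply, MonoidAlgebra.coeff_single]; erw [Finsupp.lift_apply, Finsupp.sum_single_index (by simp)]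
  rw [AddMonoidAlgebra.smul_single', mul_one]

/-- counit as an algebra hom on Halpha -/
noncomputable def epsMon : Multiplicative (Multiset PBT) →* ℂ where
  toFun m := if Multiplicative.toAdd m = 0 then 1 else 0
  map_one' := by simp
  map_mul' x y := by
    by_cases hx : Multiplicative.toAdd x = 0 <;> by_cases hy : Multiplicative.toAdd y = 0 <;>
      simp [hx, hy, toAdd_mul]

noncomputable def epsA : Halpha →ₐ[ℂ] ℂ :=
  AddMonoidAlgebra.lift ℂ ℂ (Multiset PBT) epsMon

theorem epsA_single (m : Multiset PBT) (c : ℂ) :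
    epsA (AddMonoidAlgebra.single m c) = if m = 0 then c else 0 := by
  rw [epsA, AddMonoidAlgebra.lift_single]
  simp only [epsMon, MonoidHom.coe_mk, OneHom.coe_mk, toAdd_ofAdd]
  split <;> simp

theorem chargeCounit_single (m : Multiset PBT) (c : ℂ) :
    chargeCounit (AddMonoidAlgebra.single m c) = if m = 0 then c else 0 := by
  rw [chargeCounit, LinearMap.comp_apply, LinearEquiv.coe_coe, AddMonoidAlgebra.coeffLinearEquiv_apply, AddMonoidAlgebra.coeff_single]; erw [Finsupp.lift_apply, Finsupp.sum_single_index (by simp)]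
  split <;> simp

theorem chargeCounit_eq : chargeCounit = epsA.toLinearMap := by
  apply AMA_lhom_ext
  intro a b
  show chargeCounit (AddMonoidAlgebra.single a b) = epsA (AddMonoidAlgebra.single a b)
  rw [chargeCounit_single, epsA_single]

-- ## Stage 3 : coassociativity at the tree level

noncomputable def Vmap : Htilde →ₗ[ℂ] Htilde :=
  MonoidAlgebra.mapDomainLinearMap ℂ ℂ (fun t => PBT.node PBT.leaf t)

theorem VhatT_def : VhatT = TensorProduct.map Vmap LinearMap.id := rfl

theorem Vmap_single (t : PBT) (c : ℂ) :
    Vmap (MonoidAlgebra.single t c) = MonoidAlgebra.single (PBT.node PBT.leaf t) c := by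
  exact MonoidAlgebra.mapDomainLinearMap_single _ _ _

theorem Ddt_node_1 (l r : PBT) :
    (Ddt (PBT.node l r)).1 = (Ddt l).1 * ((1 : Htilde) ⊗ₜ[ℂ] Vgen r + VhatT (Ddt r).2) := rfl

theorem Ddt_node_2 (l r : PBT) :
    (Ddt (PBT.node l r)).2 = (Ddt l).1 * VhatT (Ddt r).2 := rfl

theorem one_Htilde : (1 : Htilde) = MonoidAlgebra.single PBT.leaf 1 := rfl

-- (L4)  δ ∘ V = V̂ ∘ δ
theorem dl_comp_Vmap : dl ∘ₗ Vmap = VhatT ∘ₗ dl := by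
  apply MA_lhom_ext
  intro a b
  show dl (Vmap (MonoidAlgebra.single a b)) = VhatT (dl (MonoidAlgebra.single a b))
  rw [Vmap_single, dl_single, dl_single, Ddt_node_2, map_smul]
  show b • ((Ddt PBT.leaf).1 * _) = _
  rw [show (Ddt PBT.leaf).1 = 1 from rfl, one_mul]

-- (L1)  Δ ∘ V = (1 ⊗ V ·) + V̂ ∘ δ
theorem DlA_comp_Vmap :
    DlA.toLinearMap ∘ₗ Vmap =
      (TensorProduct.mk ℂ Htilde Htilde 1) ∘ₗ Vmap + VhatT ∘ₗ dl := by
  apply MA_lhom_ext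
  intro a b
  show DlA (Vmap (MonoidAlgebra.single a b)) =
    1 ⊗ₜ[ℂ] (Vmap (MonoidAlgebra.single a b)) + VhatT (dl (MonoidAlgebra.single a b))
  rw [Vmap_single, DlA_single, dl_single, map_smul, Ddt_node_1,
    show (Ddt PBT.leaf).1 = 1 from rfl, one_mul, smul_add]
  congr 1
  rw [Vgen, ← tmul_smul, MonoidAlgebra.smul_single', mul_one]

-- (L3') twisted multiplicativity of δ on elements x · V(u)
theorem dl_mul_V (x u : Htilde) : dl (x * Vmap u) = DlA x * dl (Vmap u) := by
  induction x using MonoidAlgebra.induction_linear with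
  | zero => simp
  | add f g hf hg => rw [add_mul, map_add, hf, hg, map_add, add_mul]
  | single a b =>
    induction u using MonoidAlgebra.induction_linear with
    | zero => simp
    | add f g hf hg => rw [map_add, mul_add, map_add, hf, hg, map_add, mul_add]
    | single a' b' =>
      rw [Vmap_single]
      rw [show (MonoidAlgebra.single a b : Htilde) * MonoidAlgebra.single (PBT.node PBT.leaf a') b'
          = MonoidAlgebra.single (PBT.node a a') (b * b') by
        rw [MonoidAlgebra.single_mul_single]; rfl]
      rw [dl_single, dl_single, DlA_single, Ddt_node_2, Ddt_node_2,
        show (Ddt PBT.leaf).1 = 1 from rfl, one_mul, smul_mul_smul_comm]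

-- (L3) twisted multiplicativity of (δ ⊗ id) against elements of the form z · V̂y
theorem map_dl_mul (z y : Htilde ⊗[ℂ] Htilde) :
    TensorProduct.map dl LinearMap.id (z * VhatT y) =
      TensorProduct.map DlA.toLinearMap LinearMap.id z *
        TensorProduct.map dl LinearMap.id (VhatT y) := by
  induction z with
  | zero => simp
  | add z₁ z₂ h₁ h₂ => rw [add_mul, map_add, h₁, h₂, map_add, add_mul]
  | tmul x x' =>
    induction y with
    | zero => simp
    | add y₁ y₂ h₁ h₂ => rw [map_add, mul_add, map_add, h₁, h₂, map_add, mul_add]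
    | tmul u u' =>
      rw [VhatT_def, map_tmul, Algebra.TensorProduct.tmul_mul_tmul, map_tmul, map_tmul,
        map_tmul, Algebra.TensorProduct.tmul_mul_tmul]
      simp only [LinearMap.id_coe, id_eq]
      rw [dl_mul_V]; rfl

-- linear assoc agrees with the algebra assoc
theorem assoc_eq_algassoc :
    (TensorProduct.assoc ℂ Htilde Htilde Htilde).toLinearMap =
      (Algebra.TensorProduct.assoc ℂ ℂ ℂ Htilde Htilde Htilde).toLinearMap := by
  apply TensorProduct.ext_threefold
  intro x y z
  simp [Algebra.TensorProduct.assoc_tmul]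

theorem assoc_mul (a b : (Htilde ⊗[ℂ] Htilde) ⊗[ℂ] Htilde) :
    (TensorProduct.assoc ℂ Htilde Htilde Htilde) (a * b) =
      (TensorProduct.assoc ℂ Htilde Htilde Htilde) a *
        (TensorProduct.assoc ℂ Htilde Htilde Htilde) b := by
  have h := fun x => LinearMap.congr_fun assoc_eq_algassoc x
  simp only [LinearEquiv.coe_coe, AlgEquiv.toLinearMap_apply] at h
  rw [h, h, h, map_mul]

-- (CM1)
theorem assoc_VhatT :
    (TensorProduct.assoc ℂ Htilde Htilde Htilde).toLinearMap ∘ₗ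
        TensorProduct.map VhatT LinearMap.id =
      TensorProduct.map Vmap LinearMap.id ∘ₗ
        (TensorProduct.assoc ℂ Htilde Htilde Htilde).toLinearMap := by
  apply TensorProduct.ext_threefold
  intro x y z
  simp [VhatT_def]

-- (CM2)
theorem assoc_mk_Vmap :
    (TensorProduct.assoc ℂ Htilde Htilde Htilde).toLinearMap ∘ₗ
        TensorProduct.map ((TensorProduct.mk ℂ Htilde Htilde 1) ∘ₗ Vmap) LinearMap.id =
      (TensorProduct.mk ℂ Htilde (Htilde ⊗[ℂ] Htilde) 1) ∘ₗ VhatT := by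
  apply TensorProduct.ext'
  intro x y
  simp [VhatT_def]

theorem map_add_left {M N P Q : Type*} [AddCommMonoid M] [AddCommMonoid N] [AddCommMonoid P]
    [AddCommMonoid Q] [Module ℂ M] [Module ℂ N] [Module ℂ P] [Module ℂ Q]
    (f g : M →ₗ[ℂ] P) (h : N →ₗ[ℂ] Q) :
    TensorProduct.map (f + g) h = TensorProduct.map f h + TensorProduct.map g h := by
  apply TensorProduct.ext'
  intro x y
  simp [tmul_add, add_tmul]

-- multiplicativity of (Δ ⊗ id) and (id ⊗ Δ)
theorem mapDlA_left_mul (a b : Htilde ⊗[ℂ] Htilde) :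
    TensorProduct.map DlA.toLinearMap LinearMap.id (a * b) =
      TensorProduct.map DlA.toLinearMap LinearMap.id a *
        TensorProduct.map DlA.toLinearMap LinearMap.id b := by
  have : TensorProduct.map DlA.toLinearMap LinearMap.id =
      (Algebra.TensorProduct.map DlA (AlgHom.id ℂ Htilde)).toLinearMap := by
    apply TensorProduct.ext'; intro x y; simp
  rw [this]
  exact map_mul (Algebra.TensorProduct.map DlA (AlgHom.id ℂ Htilde)) a b

theorem mapDlA_right_mul (a b : Htilde ⊗[ℂ] Htilde) :
    TensorProduct.map LinearMap.id DlA.toLinearMap (a * b) =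
      TensorProduct.map LinearMap.id DlA.toLinearMap a *
        TensorProduct.map LinearMap.id DlA.toLinearMap b := by
  have : TensorProduct.map LinearMap.id DlA.toLinearMap =
      (Algebra.TensorProduct.map (AlgHom.id ℂ Htilde) DlA).toLinearMap := by
    apply TensorProduct.ext'; intro x y; simp
  rw [this]
  exact map_mul (Algebra.TensorProduct.map (AlgHom.id ℂ Htilde) DlA) a b

set_option maxHeartbeats 1000000 in
theorem coassoc_Ddt (t : PBT) :
    (TensorProduct.assoc ℂ Htilde Htilde Htilde)
        (TensorProduct.map DlA.toLinearMap LinearMap.id (Ddt t).1) =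
      TensorProduct.map LinearMap.id DlA.toLinearMap (Ddt t).1 ∧
    (TensorProduct.assoc ℂ Htilde Htilde Htilde)
        (TensorProduct.map dl LinearMap.id (Ddt t).2) =
      TensorProduct.map LinearMap.id DlA.toLinearMap (Ddt t).2 := by
  induction t with
  | leaf =>
    have h1 : dl (1 : Htilde) = 1 := by rw [one_Htilde, dl_single, one_smul]; rfl
    have h2 : DlA.toLinearMap (1 : Htilde) = 1 := map_one DlA
    constructor
    · show (TensorProduct.assoc ℂ Htilde Htilde Htilde)
          (TensorProduct.map DlA.toLinearMap LinearMap.id (1 : Htilde ⊗[ℂ] Htilde)) =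
        TensorProduct.map LinearMap.id DlA.toLinearMap (1 : Htilde ⊗[ℂ] Htilde)
      rw [Algebra.TensorProduct.one_def, map_tmul, map_tmul]
      simp only [LinearMap.id_coe, id_eq, h1, h2]
      rw [Algebra.TensorProduct.one_def, assoc_tmul]
    · show (TensorProduct.assoc ℂ Htilde Htilde Htilde)
          (TensorProduct.map dl LinearMap.id (1 : Htilde ⊗[ℂ] Htilde)) =
        TensorProduct.map LinearMap.id DlA.toLinearMap (1 : Htilde ⊗[ℂ] Htilde)
      rw [Algebra.TensorProduct.one_def, map_tmul, map_tmul]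
      simp only [LinearMap.id_coe, id_eq, h1, h2]
      rw [Algebra.TensorProduct.one_def, assoc_tmul]
  | node l r ihl ihr =>
    -- commutation of (id ⊗ Δ) with V̂ :
    have hD : ∀ y : Htilde ⊗[ℂ] Htilde,
        TensorProduct.map LinearMap.id DlA.toLinearMap (VhatT y) =
          TensorProduct.map Vmap LinearMap.id
            (TensorProduct.map LinearMap.id DlA.toLinearMap y) := by
      intro y
      rw [VhatT_def, ← LinearMap.comp_apply, ← LinearMap.comp_apply,
        ← TensorProduct.map_comp, ← TensorProduct.map_comp,
        LinearMap.id_comp, LinearMap.comp_id, LinearMap.id_comp, LinearMap.comp_id]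
    -- assoc ∘ (V̂ ⊗ id) commutation on elements
    have hAs : ∀ w : (Htilde ⊗[ℂ] Htilde) ⊗[ℂ] Htilde,
        (TensorProduct.assoc ℂ Htilde Htilde Htilde)
            (TensorProduct.map VhatT LinearMap.id w) =
          TensorProduct.map Vmap LinearMap.id
            ((TensorProduct.assoc ℂ Htilde Htilde Htilde) w) := by
      intro w
      have := LinearMap.congr_fun assoc_VhatT w
      simpa using this
    have hVgen : (TensorProduct.assoc ℂ Htilde Htilde Htilde)
          (TensorProduct.map dl LinearMap.id (VhatT (Ddt r).2)) =
        TensorProduct.map LinearMap.id DlA.toLinearMap (VhatT (Ddt r).2) := by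
      have e1 : TensorProduct.map dl LinearMap.id (VhatT (Ddt r).2) =
          TensorProduct.map VhatT LinearMap.id
            (TensorProduct.map dl LinearMap.id (Ddt r).2) := by
        rw [VhatT_def, ← LinearMap.comp_apply, ← TensorProduct.map_comp,
          dl_comp_Vmap, TensorProduct.map_comp, LinearMap.comp_apply]
        rfl
      rw [e1, hAs, ihr.2, hD]
    have hDlAV : DlA (Vgen r) = (1 : Htilde) ⊗ₜ[ℂ] Vgen r + VhatT (Ddt r).2 := by
      rw [Vgen, DlA_single, one_smul, Ddt_node_1,
        show (Ddt PBT.leaf).1 = 1 from rfl, one_mul]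
      rfl
    have hGen : (TensorProduct.assoc ℂ Htilde Htilde Htilde)
          (TensorProduct.map DlA.toLinearMap LinearMap.id
            ((1 : Htilde) ⊗ₜ[ℂ] Vgen r + VhatT (Ddt r).2)) =
        TensorProduct.map LinearMap.id DlA.toLinearMap
          ((1 : Htilde) ⊗ₜ[ℂ] Vgen r + VhatT (Ddt r).2) := by
      have hA : (TensorProduct.assoc ℂ Htilde Htilde Htilde)
            (TensorProduct.map DlA.toLinearMap LinearMap.id
              ((1 : Htilde) ⊗ₜ[ℂ] Vgen r)) =
          (1 : Htilde) ⊗ₜ[ℂ] ((1 : Htilde) ⊗ₜ[ℂ] Vgen r) := by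
        rw [map_tmul]
        simp only [LinearMap.id_coe, id_eq]
        rw [show DlA.toLinearMap (1 : Htilde) = 1 from map_one DlA,
          Algebra.TensorProduct.one_def, assoc_tmul]
      have hB : (TensorProduct.assoc ℂ Htilde Htilde Htilde)
            (TensorProduct.map DlA.toLinearMap LinearMap.id (VhatT (Ddt r).2)) =
          (1 : Htilde) ⊗ₜ[ℂ] (VhatT (Ddt r).2) +
            TensorProduct.map Vmap LinearMap.id
              (TensorProduct.map LinearMap.id DlA.toLinearMap (Ddt r).2) := by
        have e : TensorProduct.map DlA.toLinearMap LinearMap.id (VhatT (Ddt r).2) =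
            TensorProduct.map ((TensorProduct.mk ℂ Htilde Htilde 1) ∘ₗ Vmap) LinearMap.id
                (Ddt r).2 +
              TensorProduct.map VhatT LinearMap.id
                (TensorProduct.map dl LinearMap.id (Ddt r).2) := by
          rw [VhatT_def, ← LinearMap.comp_apply, ← TensorProduct.map_comp, DlA_comp_Vmap,
            map_add_left, LinearMap.add_apply]
          congr 1
          rw [TensorProduct.map_comp, LinearMap.comp_apply, VhatT_def]
        rw [e, (TensorProduct.assoc ℂ Htilde Htilde Htilde).map_add, hAs, ihr.2]
        congr 1
        have := LinearMap.congr_fun assoc_mk_Vmap (Ddt r).2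
        simpa using this
      have hC : TensorProduct.map LinearMap.id DlA.toLinearMap
            ((1 : Htilde) ⊗ₜ[ℂ] Vgen r) =
          (1 : Htilde) ⊗ₜ[ℂ] ((1 : Htilde) ⊗ₜ[ℂ] Vgen r) +
            (1 : Htilde) ⊗ₜ[ℂ] (VhatT (Ddt r).2) := by
        rw [map_tmul]
        simp only [LinearMap.id_coe, id_eq, AlgHom.toLinearMap_apply]
        rw [hDlAV, tmul_add]
      rw [map_add, (TensorProduct.assoc ℂ Htilde Htilde Htilde).map_add, hA, hB,
        map_add, hC, hD]
      abel
    refine ⟨?_, ?_⟩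
    · rw [Ddt_node_1, mapDlA_left_mul, assoc_mul, ihl.1, hGen, mapDlA_right_mul]
    · rw [Ddt_node_2, map_dl_mul, assoc_mul, ihl.1, hVgen, mapDlA_right_mul]

-- ## Stage 4 : counit at the tree level
noncomputable def epsH : Htilde →ₐ[ℂ] ℂ := epsA.comp piAbA

theorem epsH_single (t : PBT) (c : ℂ) :
    epsH (MonoidAlgebra.single t c) = if t = PBT.leaf then c else 0 := by
  rw [epsH, AlgHom.comp_apply, piAbA_single, epsA_single]
  simp [gens_eq_zero_iff]

theorem epsH_one : epsH (1 : Htilde) = 1 := map_one epsH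

theorem epsH_Vgen (u : PBT) : epsH (Vgen u) = 0 := by
  rw [Vgen, epsH_single]
  simp

theorem epsH_comp_Vmap : epsH.toLinearMap ∘ₗ Vmap = 0 := by
  apply MA_lhom_ext
  intro a b
  show epsH (Vmap (MonoidAlgebra.single a b)) = 0
  rw [Vmap_single, epsH_single]
  simp

theorem map_zero_left' {M N P Q : Type*} [AddCommMonoid M] [AddCommMonoid N] [AddCommMonoid P]
    [AddCommMonoid Q] [Module ℂ M] [Module ℂ N] [Module ℂ P] [Module ℂ Q] (h : N →ₗ[ℂ] Q) :
    TensorProduct.map (0 : M →ₗ[ℂ] P) h = 0 := by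
  apply TensorProduct.ext'
  intro x y
  simp

theorem lid_eq_alg :
    (TensorProduct.lid ℂ Htilde).toLinearMap =
      (Algebra.TensorProduct.lid ℂ Htilde).toLinearMap := by
  apply TensorProduct.ext'
  intro c x
  simp

theorem rid_eq_alg :
    (TensorProduct.rid ℂ Htilde).toLinearMap =
      (Algebra.TensorProduct.rid ℂ ℂ Htilde).toLinearMap := by
  apply TensorProduct.ext'
  intro x c
  simp

theorem lid_eps_mul (a b : Htilde ⊗[ℂ] Htilde) :
    (TensorProduct.lid ℂ Htilde)
        (TensorProduct.map epsH.toLinearMap LinearMap.id (a * b)) =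
      (TensorProduct.lid ℂ Htilde) (TensorProduct.map epsH.toLinearMap LinearMap.id a) *
        (TensorProduct.lid ℂ Htilde) (TensorProduct.map epsH.toLinearMap LinearMap.id b) := by
  have h : (TensorProduct.lid ℂ Htilde).toLinearMap ∘ₗ
      TensorProduct.map epsH.toLinearMap LinearMap.id =
      ((Algebra.TensorProduct.lid ℂ Htilde).toAlgHom.comp
        (Algebra.TensorProduct.map epsH (AlgHom.id ℂ Htilde))).toLinearMap := by
    apply TensorProduct.ext'
    intro x y
    simp
  have hp := fun z => LinearMap.congr_fun h z
  simp only [LinearMap.comp_apply, LinearEquiv.coe_coe, AlgHom.toLinearMap_apply] at hp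
  rw [hp, hp, hp, map_mul]

theorem rid_eps_mul (a b : Htilde ⊗[ℂ] Htilde) :
    (TensorProduct.rid ℂ Htilde)
        (TensorProduct.map LinearMap.id epsH.toLinearMap (a * b)) =
      (TensorProduct.rid ℂ Htilde) (TensorProduct.map LinearMap.id epsH.toLinearMap a) *
        (TensorProduct.rid ℂ Htilde) (TensorProduct.map LinearMap.id epsH.toLinearMap b) := by
  have h : (TensorProduct.rid ℂ Htilde).toLinearMap ∘ₗ
      TensorProduct.map LinearMap.id epsH.toLinearMap =
      ((Algebra.TensorProduct.rid ℂ ℂ Htilde).toAlgHom.comp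
        (Algebra.TensorProduct.map (AlgHom.id ℂ Htilde) epsH)).toLinearMap := by
    apply TensorProduct.ext'
    intro x y
    simp [Algebra.TensorProduct.rid_tmul, Algebra.smul_def, mul_comm]
  have hp := fun z => LinearMap.congr_fun h z
  simp only [LinearMap.comp_apply, LinearEquiv.coe_coe, AlgHom.toLinearMap_apply] at hp
  rw [hp, hp, hp, map_mul]

theorem rid_eps_Vhat (y : Htilde ⊗[ℂ] Htilde) :
    (TensorProduct.rid ℂ Htilde)
        (TensorProduct.map LinearMap.id epsH.toLinearMap (VhatT y)) =
      Vmap ((TensorProduct.rid ℂ Htilde)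
        (TensorProduct.map LinearMap.id epsH.toLinearMap y)) := by
  have h : (TensorProduct.rid ℂ Htilde).toLinearMap ∘ₗ
      TensorProduct.map LinearMap.id epsH.toLinearMap ∘ₗ VhatT =
      Vmap ∘ₗ (TensorProduct.rid ℂ Htilde).toLinearMap ∘ₗ
        TensorProduct.map LinearMap.id epsH.toLinearMap := by
    apply TensorProduct.ext'
    intro x y
    simp [VhatT_def, TensorProduct.rid_tmul, map_smul]
  have := LinearMap.congr_fun h y
  simpa using this

theorem lid_eps_Vhat (y : Htilde ⊗[ℂ] Htilde) :
    (TensorProduct.lid ℂ Htilde)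
        (TensorProduct.map epsH.toLinearMap LinearMap.id (VhatT y)) = 0 := by
  rw [VhatT_def, ← LinearMap.comp_apply, ← TensorProduct.map_comp, epsH_comp_Vmap,
    LinearMap.comp_id, map_zero_left']
  simp

theorem counit_Ddt (t : PBT) :
    (TensorProduct.lid ℂ Htilde)
        (TensorProduct.map epsH.toLinearMap LinearMap.id (Ddt t).1) =
      MonoidAlgebra.single t 1 ∧
    (TensorProduct.rid ℂ Htilde)
        (TensorProduct.map LinearMap.id epsH.toLinearMap (Ddt t).1) =
      MonoidAlgebra.single t 1 ∧
    (TensorProduct.rid ℂ Htilde)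
        (TensorProduct.map LinearMap.id epsH.toLinearMap (Ddt t).2) =
      MonoidAlgebra.single t 1 := by
  induction t with
  | leaf =>
    refine ⟨?_, ?_, ?_⟩ <;>
    · rw [← one_Htilde]
      first
      | rw [show (Ddt PBT.leaf).1 = (1 : Htilde ⊗[ℂ] Htilde) from rfl]
      | rw [show (Ddt PBT.leaf).2 = (1 : Htilde ⊗[ℂ] Htilde) from rfl]
      rw [Algebra.TensorProduct.one_def]
      simp [epsH_one]
  | node l r ihl ihr =>
    have hmul : MonoidAlgebra.single l (1 : ℂ) * Vgen r =
        MonoidAlgebra.single (PBT.node l r) 1 := by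
      rw [Vgen, MonoidAlgebra.single_mul_single, mul_one]
      rfl
    have hXr : (TensorProduct.rid ℂ Htilde)
        (TensorProduct.map LinearMap.id epsH.toLinearMap (VhatT (Ddt r).2)) = Vgen r := by
      rw [rid_eps_Vhat, ihr.2.2, Vmap_single, Vgen]
    refine ⟨?_, ?_, ?_⟩
    · rw [Ddt_node_1, lid_eps_mul, ihl.1, map_add, map_add, lid_eps_Vhat, add_zero,
        map_tmul]
      simp only [LinearMap.id_coe, id_eq, AlgHom.toLinearMap_apply, epsH_one]
      rw [TensorProduct.lid_tmul, one_smul, hmul]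
    · rw [Ddt_node_1, rid_eps_mul, ihl.2.1, map_add, map_add, hXr, map_tmul]
      simp only [LinearMap.id_coe, id_eq, AlgHom.toLinearMap_apply, epsH_Vgen]
      rw [TensorProduct.tmul_zero, map_zero, zero_add, hmul]
    · rw [Ddt_node_2, rid_eps_mul, ihl.2.1, hXr, hmul]

-- ## Stage 5 : transfer to Halpha

theorem single_node (l r : PBT) :
    (MonoidAlgebra.single (PBT.node l r) (1 : ℂ) : Htilde) =
      MonoidAlgebra.single l 1 * Vgen r := by
  rw [Vgen, MonoidAlgebra.single_mul_single, mul_one]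
  rfl

theorem mapPi_eq :
    (Algebra.TensorProduct.map piAbA piAbA).toLinearMap =
      TensorProduct.map piAb piAb := by
  apply TensorProduct.ext'
  intro x y
  simp [piAb_eq]

theorem comul_chargeGen (r : PBT) :
    chargeComul (AddMonoidAlgebra.single ({r} : Multiset PBT) (1 : ℂ)) = chargeGen r := by
  rw [chargeComul, AddMonoidAlgebra.lift_single, one_smul]
  show ((Multiplicative.toAdd (Multiplicative.ofAdd ({r} : Multiset PBT))).map chargeGen).prod = _
  simp

theorem gens_V (r : PBT) : gens (PBT.node PBT.leaf r) = {r} := by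
  simp [gens]

-- the intertwining of Δ with the abelianization
theorem comul_piAbA :
    chargeComul.comp piAbA = (Algebra.TensorProduct.map piAbA piAbA).comp DlA := by
  apply MonoidAlgebra.algHom_ext
  intro t
  induction t with
  | leaf =>
    rw [← one_Htilde]
    simp
  | node l r ihl ihr =>
    rw [single_node, map_mul, map_mul, ihl]
    congr 1
    show chargeComul (piAbA (Vgen r)) = (Algebra.TensorProduct.map piAbA piAbA) (DlA (Vgen r))
    have h1 : piAbA (Vgen r) = AddMonoidAlgebra.single ({r} : Multiset PBT) 1 := by
      rw [Vgen, piAbA_single, gens_V]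
    have h2 : DlA (Vgen r) = (Ddt (PBT.node PBT.leaf r)).1 := by
      rw [Vgen, DlA_single, one_smul]
    rw [h1, h2, comul_chargeGen, chargeGen]
    exact (LinearMap.congr_fun mapPi_eq _).symm
  exact Subsingleton.elim _ _

theorem comul_piAb_lin :
    chargeComul.toLinearMap ∘ₗ piAb = TensorProduct.map piAb piAb ∘ₗ DlA.toLinearMap := by
  have hm : (Algebra.TensorProduct.map piAbA piAbA).toLinearMap =
      TensorProduct.map piAb piAb := mapPi_eq
  rw [piAb_eq, ← AlgHom.comp_toLinearMap, comul_piAbA, AlgHom.comp_toLinearMap, hm, piAb_eq]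

theorem counit_piAb : chargeCounit ∘ₗ piAb = epsH.toLinearMap := by
  apply MA_lhom_ext
  intro a b
  show chargeCounit (piAb (MonoidAlgebra.single a b)) = epsH (MonoidAlgebra.single a b)
  rw [piAb_eq, epsH_single]
  show chargeCounit (piAbA (MonoidAlgebra.single a b)) = _
  rw [piAbA_single, chargeCounit_single]
  simp [gens_eq_zero_iff]

theorem piAbA_canon (m : Multiset PBT) :
    piAbA (MonoidAlgebra.single (canonTree m) 1) = AddMonoidAlgebra.single m 1 := by
  rw [piAbA_single, gens_canonTree]

theorem piAb_canon (m : Multiset PBT) :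
    piAb (MonoidAlgebra.single (canonTree m) 1) = AddMonoidAlgebra.single m 1 := by
  rw [piAb_eq]
  exact piAbA_canon m

theorem comul_single (m : Multiset PBT) :
    chargeComul (AddMonoidAlgebra.single m (1 : ℂ)) =
      TensorProduct.map piAb piAb (Ddt (canonTree m)).1 := by
  have h := LinearMap.congr_fun comul_piAb_lin (MonoidAlgebra.single (canonTree m) 1)
  simp only [LinearMap.comp_apply, AlgHom.toLinearMap_apply] at h
  have h3 : DlA (MonoidAlgebra.single (canonTree m) 1) = (Ddt (canonTree m)).1 := by
    rw [DlA_single, one_smul]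
  rw [piAb_canon] at h
  rw [h3] at h
  exact h

-- naturality lemmas
theorem assoc_naturality (f g h : Htilde →ₗ[ℂ] Halpha) :
    (TensorProduct.assoc ℂ Halpha Halpha Halpha).toLinearMap ∘ₗ
        TensorProduct.map (TensorProduct.map f g) h =
      TensorProduct.map f (TensorProduct.map g h) ∘ₗ
        (TensorProduct.assoc ℂ Htilde Htilde Htilde).toLinearMap := by
  apply TensorProduct.ext_threefold
  intro x y z
  simp

theorem coassoc_single (m : Multiset PBT) :
    (TensorProduct.assoc ℂ Halpha Halpha Halpha)
        ((TensorProduct.map chargeComul.toLinearMap LinearMap.id)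
          (chargeComul (AddMonoidAlgebra.single m 1))) =
      (TensorProduct.map LinearMap.id chargeComul.toLinearMap)
        (chargeComul (AddMonoidAlgebra.single m 1)) := by
  rw [comul_single]
  have e1 : TensorProduct.map chargeComul.toLinearMap LinearMap.id ∘ₗ
        TensorProduct.map piAb piAb =
      TensorProduct.map (TensorProduct.map piAb piAb) piAb ∘ₗ
        TensorProduct.map DlA.toLinearMap LinearMap.id := by
    rw [← TensorProduct.map_comp, ← TensorProduct.map_comp, comul_piAb_lin,
      LinearMap.id_comp, LinearMap.comp_id]
  have e2 : TensorProduct.map LinearMap.id chargeComul.toLinearMap ∘ₗ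
        TensorProduct.map piAb piAb =
      TensorProduct.map piAb (TensorProduct.map piAb piAb) ∘ₗ
        TensorProduct.map LinearMap.id DlA.toLinearMap := by
    rw [← TensorProduct.map_comp, ← TensorProduct.map_comp, comul_piAb_lin,
      LinearMap.id_comp, LinearMap.comp_id]
  rw [← LinearMap.comp_apply, ← LinearMap.comp_apply, e1, e2]
  rw [LinearMap.comp_apply, LinearMap.comp_apply]
  have := LinearMap.congr_fun (assoc_naturality piAb piAb piAb)
    (TensorProduct.map DlA.toLinearMap LinearMap.id (Ddt (canonTree m)).1)
  simp only [LinearMap.comp_apply, LinearEquiv.coe_coe] at this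
  rw [this, (coassoc_Ddt (canonTree m)).1]

theorem lid_naturality :
    (TensorProduct.lid ℂ Halpha).toLinearMap ∘ₗ
        TensorProduct.map epsH.toLinearMap piAb =
      piAb ∘ₗ (TensorProduct.lid ℂ Htilde).toLinearMap ∘ₗ
        TensorProduct.map epsH.toLinearMap LinearMap.id := by
  apply TensorProduct.ext'
  intro x y
  simp

theorem rid_naturality :
    (TensorProduct.rid ℂ Halpha).toLinearMap ∘ₗ
        TensorProduct.map piAb epsH.toLinearMap =
      piAb ∘ₗ (TensorProduct.rid ℂ Htilde).toLinearMap ∘ₗ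
        TensorProduct.map LinearMap.id epsH.toLinearMap := by
  apply TensorProduct.ext'
  intro x y
  simp

theorem counit_left_single (m : Multiset PBT) :
    (TensorProduct.lid ℂ Halpha)
        ((TensorProduct.map chargeCounit LinearMap.id)
          (chargeComul (AddMonoidAlgebra.single m 1))) =
      AddMonoidAlgebra.single m 1 := by
  rw [comul_single]
  have e1 : TensorProduct.map chargeCounit LinearMap.id ∘ₗ
        TensorProduct.map piAb piAb =
      TensorProduct.map epsH.toLinearMap piAb := by
    rw [← TensorProduct.map_comp, counit_piAb, LinearMap.id_comp]
  rw [← LinearMap.comp_apply, e1]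
  have := LinearMap.congr_fun lid_naturality (Ddt (canonTree m)).1
  simp only [LinearMap.comp_apply, LinearEquiv.coe_coe] at this
  rw [this, (counit_Ddt (canonTree m)).1, piAb_canon]

theorem counit_right_single (m : Multiset PBT) :
    (TensorProduct.rid ℂ Halpha)
        ((TensorProduct.map LinearMap.id chargeCounit)
          (chargeComul (AddMonoidAlgebra.single m 1))) =
      AddMonoidAlgebra.single m 1 := by
  rw [comul_single]
  have e1 : TensorProduct.map LinearMap.id chargeCounit ∘ₗ
        TensorProduct.map piAb piAb =
      TensorProduct.map piAb epsH.toLinearMap := by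
    rw [← TensorProduct.map_comp, counit_piAb, LinearMap.id_comp]
  rw [← LinearMap.comp_apply, e1]
  have := LinearMap.congr_fun rid_naturality (Ddt (canonTree m)).1
  simp only [LinearMap.comp_apply, LinearEquiv.coe_coe] at this
  rw [this, (counit_Ddt (canonTree m)).2.1, piAb_canon]

-- ## Stage 5b : gradedness

noncomputable def QH (n : ℕ) : Submodule ℂ (Htilde ⊗[ℂ] Htilde) :=
  Submodule.span ℂ {x | ∃ a b : PBT, order a + order b = n ∧
    x = MonoidAlgebra.single a (1 : ℂ) ⊗ₜ[ℂ] MonoidAlgebra.single b 1}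

theorem QH_mul {p q : ℕ} {x y : Htilde ⊗[ℂ] Htilde}
    (hx : x ∈ QH p) (hy : y ∈ QH q) : x * y ∈ QH (p + q) := by
  have h := Submodule.mul_mem_mul hx hy
  rw [QH, QH, Submodule.span_mul_span] at h
  refine Submodule.span_le.2 ?_ h
  rintro z ⟨z₁, hz₁, z₂, hz₂, rfl⟩
  obtain ⟨a₁, b₁, hab₁, rfl⟩ := hz₁
  obtain ⟨a₂, b₂, hab₂, rfl⟩ := hz₂
  apply Submodule.subset_span
  refine ⟨a₁ * a₂, b₁ * b₂, ?_, ?_⟩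
  · show order (overT a₁ a₂) + order (overT b₁ b₂) = p + q
    rw [order_over, order_over]
    omega
  · show (MonoidAlgebra.single a₁ (1:ℂ) ⊗ₜ[ℂ] MonoidAlgebra.single b₁ 1) *
        (MonoidAlgebra.single a₂ 1 ⊗ₜ[ℂ] MonoidAlgebra.single b₂ 1) = _
    rw [Algebra.TensorProduct.tmul_mul_tmul, MonoidAlgebra.single_mul_single,
      MonoidAlgebra.single_mul_single, mul_one]

theorem QH_Vhat {n : ℕ} {x : Htilde ⊗[ℂ] Htilde} (hx : x ∈ QH n) :
    VhatT x ∈ QH (n + 1) := by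
  have h : VhatT x ∈ Submodule.map VhatT (QH n) := Submodule.mem_map_of_mem hx
  rw [QH, Submodule.map_span] at h
  refine Submodule.span_le.2 ?_ h
  rintro z ⟨w, ⟨a, b, hab, rfl⟩, rfl⟩
  apply Submodule.subset_span
  refine ⟨PBT.node PBT.leaf a, b, ?_, ?_⟩
  · show (order PBT.leaf + order a + 1) + order b = n + 1
    simp only [order]
    omega
  · rw [VhatT_def, map_tmul, Vmap_single]
    rfl

theorem one_mem_QH : (1 : Htilde ⊗[ℂ] Htilde) ∈ QH 0 := by
  apply Submodule.subset_span
  exact ⟨PBT.leaf, PBT.leaf, rfl, by rw [Algebra.TensorProduct.one_def, one_Htilde]⟩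

theorem tmulVgen_mem_QH (r : PBT) :
    ((1 : Htilde) ⊗ₜ[ℂ] Vgen r) ∈ QH (order r + 1) := by
  apply Submodule.subset_span
  refine ⟨PBT.leaf, PBT.node PBT.leaf r, ?_, ?_⟩
  · show order PBT.leaf + (order PBT.leaf + order r + 1) = order r + 1
    simp only [order]; omega
  · rw [one_Htilde, Vgen]

theorem Ddt_mem_QH (t : PBT) :
    (Ddt t).1 ∈ QH (order t) ∧ (Ddt t).2 ∈ QH (order t) := by
  induction t with
  | leaf => exact ⟨one_mem_QH, one_mem_QH⟩
  | node l r ihl ihr =>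
    have hX : ((1 : Htilde) ⊗ₜ[ℂ] Vgen r + VhatT (Ddt r).2) ∈ QH (order r + 1) :=
      Submodule.add_mem _ (tmulVgen_mem_QH r) (QH_Vhat ihr.2)
    constructor
    · rw [Ddt_node_1]
      have := QH_mul ihl.1 hX
      rwa [show order l + (order r + 1) = order (PBT.node l r) by simp only [order]; omega] at this
    · rw [Ddt_node_2]
      have := QH_mul ihl.1 (QH_Vhat ihr.2)
      rwa [show order l + (order r + 1) = order (PBT.node l r) by simp only [order]; omega] at this

theorem graded_single (m : Multiset PBT) :
    chargeComul (AddMonoidAlgebra.single m 1) ∈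
      Submodule.span ℂ {x : Halpha ⊗[ℂ] Halpha |
        ∃ m₁ m₂ : Multiset PBT, degMon m₁ + degMon m₂ = degMon m ∧
          x = AddMonoidAlgebra.single m₁ (1 : ℂ) ⊗ₜ[ℂ] AddMonoidAlgebra.single m₂ 1} := by
  rw [comul_single]
  have hmem := (Ddt_mem_QH (canonTree m)).1
  have h : TensorProduct.map piAb piAb (Ddt (canonTree m)).1 ∈
      Submodule.map (TensorProduct.map piAb piAb) (QH (order (canonTree m))) :=
    Submodule.mem_map_of_mem hmem
  rw [QH, Submodule.map_span] at h
  refine Submodule.span_le.2 ?_ h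
  rintro z ⟨w, ⟨a, b, hab, rfl⟩, rfl⟩
  apply Submodule.subset_span
  refine ⟨gens a, gens b, ?_, ?_⟩
  · rw [degMon_gens, degMon_gens, hab, ← degMon_gens, gens_canonTree]
  · rw [map_tmul]
    congr 1 <;> (rw [piAb_eq]; first | exact piAbA_single a 1 | exact piAbA_single b 1)

-- ## Stage 6 : antipode

/-- coordinates of Halpha ⊗ Halpha -/
noncomputable def TT : Halpha ⊗[ℂ] Halpha ≃ₗ[ℂ] (Multiset PBT × Multiset PBT) →₀ ℂ :=
  (TensorProduct.congr (AddMonoidAlgebra.coeffLinearEquiv ℂ) (AddMonoidAlgebra.coeffLinearEquiv ℂ)).trans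
    (finsuppTensorFinsupp' ℂ (Multiset PBT) (Multiset PBT))

theorem TT_single (p q : Multiset PBT) (c d : ℂ) :
    TT ((AddMonoidAlgebra.single p c : Halpha) ⊗ₜ[ℂ] (AddMonoidAlgebra.single q d : Halpha)) =
      Finsupp.single (p, q) (c * d) := by
  rw [TT, LinearEquiv.trans_apply, TensorProduct.congr_tmul]
  exact finsuppTensorFinsupp'_single_tmul_single ℂ (Multiset PBT) (Multiset PBT) p q c d

theorem TT_symm_single (p q : Multiset PBT) (c : ℂ) :
    TT.symm (Finsupp.single (p, q) c) =
      c • ((AddMonoidAlgebra.single p 1 : Halpha) ⊗ₜ[ℂ] (AddMonoidAlgebra.single q 1 : Halpha)) := by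
  apply TT.injective
  rw [LinearEquiv.apply_symm_apply, map_smul, TT_single, one_mul, Finsupp.smul_single,
    smul_eq_mul, mul_one]

/-- decomposition of an arbitrary element of Halpha ⊗ Halpha in the monomial basis -/
theorem DEC (y : Halpha ⊗[ℂ] Halpha) :
    y = (TT y).sum fun pq r =>
      r • ((AddMonoidAlgebra.single pq.1 1 : Halpha) ⊗ₜ[ℂ]
        (AddMonoidAlgebra.single pq.2 1 : Halpha)) := by
  conv_lhs => rw [← TT.symm_apply_apply y, ← Finsupp.sum_single (TT y)]
  rw [map_finsuppSum]
  exact Finsupp.sum_congr fun pq _ => TT_symm_single pq.1 pq.2 _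

/-- the structure coefficients of the charge coproduct -/
noncomputable def cD (m : Multiset PBT) : (Multiset PBT × Multiset PBT) →₀ ℂ :=
  TT (chargeComul (AddMonoidAlgebra.single m 1))

theorem comul_dec (m : Multiset PBT) :
    chargeComul (AddMonoidAlgebra.single m 1) = (cD m).sum fun pq r =>
      r • ((AddMonoidAlgebra.single pq.1 1 : Halpha) ⊗ₜ[ℂ]
        (AddMonoidAlgebra.single pq.2 1 : Halpha)) :=
  DEC _

/-- homogeneity of the structure coefficients -/
theorem cD_support_deg {m : Multiset PBT} {pq : Multiset PBT × Multiset PBT}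
    (h : pq ∈ (cD m).support) : degMon pq.1 + degMon pq.2 = degMon m := by
  have hy := graded_single m
  have hmem : cD m ∈ Finsupp.supported ℂ ℂ
      {pq : Multiset PBT × Multiset PBT | degMon pq.1 + degMon pq.2 = degMon m} := by
    have himg : cD m ∈ Submodule.map TT.toLinearMap
        (Submodule.span ℂ {x : Halpha ⊗[ℂ] Halpha |
          ∃ m₁ m₂ : Multiset PBT, degMon m₁ + degMon m₂ = degMon m ∧
            x = AddMonoidAlgebra.single m₁ (1 : ℂ) ⊗ₜ[ℂ] AddMonoidAlgebra.single m₂ 1}) :=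
      Submodule.mem_map_of_mem hy
    rw [Submodule.map_span] at himg
    refine Submodule.span_le.2 ?_ himg
    rintro z ⟨w, ⟨m₁, m₂, hdeg, rfl⟩, rfl⟩
    show TT _ ∈ _
    rw [TT_single, one_mul]
    exact Finsupp.single_mem_supported ℂ 1 hdeg
  rw [Finsupp.mem_supported] at hmem
  exact hmem h

theorem cD_right_counit (m p : Multiset PBT) :
    cD m (p, 0) = if m = p then 1 else 0 := by
  have hcu := counit_right_single m
  rw [comul_dec m, map_finsuppSum, map_finsuppSum] at hcu
  have he : ((cD m).sum fun pq r =>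
      (TensorProduct.rid ℂ Halpha) ((TensorProduct.map LinearMap.id chargeCounit)
        (r • ((AddMonoidAlgebra.single pq.1 1 : Halpha) ⊗ₜ[ℂ]
          (AddMonoidAlgebra.single pq.2 1 : Halpha))))) =
      (cD m).sum fun pq r =>
        (r * if pq.2 = 0 then 1 else 0) • (AddMonoidAlgebra.single pq.1 1 : Halpha) := by
    apply Finsupp.sum_congr
    intro pq _
    rw [map_smul, map_smul, map_tmul, chargeCounit_single]
    simp only [LinearMap.id_coe, id_eq, TensorProduct.rid_tmul]
    rw [smul_smul]
  rw [he] at hcu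
  have := congrArg (fun f : Halpha => f.coeff p) hcu
  rw [Finsupp.sum, AddMonoidAlgebra.coeff_sum, Finsupp.finset_sum_apply] at this
  have hsum : (∑ pq ∈ (cD m).support,
      (((cD m) pq * if pq.2 = 0 then 1 else 0) •
        (AddMonoidAlgebra.single pq.1 1 : Halpha)).coeff p) = cD m (p, 0) := by
    have hcongr : ∀ pq ∈ (cD m).support,
        (((cD m) pq * if pq.2 = 0 then 1 else 0) •
          (AddMonoidAlgebra.single pq.1 1 : Halpha)).coeff p =
        if (p, 0) = pq then cD m pq else 0 := by
      intro pq _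
      rw [AddMonoidAlgebra.coeff_smul_apply]
      show _ * (Finsupp.single pq.1 (1:ℂ)) p = _
      rw [Finsupp.single_apply]
      by_cases h1 : pq.1 = p <;> by_cases h2 : pq.2 = 0 <;>
        simp [h1, h2, Prod.ext_iff, eq_comm] <;> tauto
    rw [Finset.sum_congr rfl hcongr, Finset.sum_ite_eq ((cD m).support) ((p, 0)) (fun pq => cD m pq)]
    split
    · rfl
    · rename_i hn
      exact (Finsupp.notMem_support_iff.1 hn).symm
  rw [hsum] at this
  rw [this]
  show (Finsupp.single m (1:ℂ)) p = _
  rw [Finsupp.single_apply]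

theorem cD_left_counit (m q : Multiset PBT) :
    cD m (0, q) = if m = q then 1 else 0 := by
  have hcu := counit_left_single m
  rw [comul_dec m, map_finsuppSum, map_finsuppSum] at hcu
  have he : ((cD m).sum fun pq r =>
      (TensorProduct.lid ℂ Halpha) ((TensorProduct.map chargeCounit LinearMap.id)
        (r • ((AddMonoidAlgebra.single pq.1 1 : Halpha) ⊗ₜ[ℂ]
          (AddMonoidAlgebra.single pq.2 1 : Halpha))))) =
      (cD m).sum fun pq r =>
        (r * if pq.1 = 0 then 1 else 0) • (AddMonoidAlgebra.single pq.2 1 : Halpha) := by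
    apply Finsupp.sum_congr
    intro pq _
    rw [map_smul, map_smul, map_tmul, chargeCounit_single]
    simp only [LinearMap.id_coe, id_eq, TensorProduct.lid_tmul]
    rw [smul_smul]
  rw [he] at hcu
  have := congrArg (fun f : Halpha => f.coeff q) hcu
  rw [Finsupp.sum, AddMonoidAlgebra.coeff_sum, Finsupp.finset_sum_apply] at this
  have hsum : (∑ pq ∈ (cD m).support,
      (((cD m) pq * if pq.1 = 0 then 1 else 0) •
        (AddMonoidAlgebra.single pq.2 1 : Halpha)).coeff q) = cD m (0, q) := by
    have hcongr : ∀ pq ∈ (cD m).support,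
        (((cD m) pq * if pq.1 = 0 then 1 else 0) •
          (AddMonoidAlgebra.single pq.2 1 : Halpha)).coeff q =
        if ((0 : Multiset PBT), q) = pq then cD m pq else 0 := by
      intro pq _
      rw [AddMonoidAlgebra.coeff_smul_apply]
      show _ * (Finsupp.single pq.2 (1:ℂ)) q = _
      rw [Finsupp.single_apply]
      by_cases h1 : pq.1 = 0 <;> by_cases h2 : pq.2 = q <;>
        simp [h1, h2, Prod.ext_iff, eq_comm] <;> tauto
    rw [Finset.sum_congr rfl hcongr, Finset.sum_ite_eq ((cD m).support) (((0 : Multiset PBT), q)) (fun pq => cD m pq)]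
    split
    · rfl
    · rename_i hn
      exact (Finsupp.notMem_support_iff.1 hn).symm
  rw [hsum] at this
  rw [this]
  show (Finsupp.single m (1:ℂ)) q = _
  rw [Finsupp.single_apply]

theorem cD_deg_lt_right {m : Multiset PBT} {pq : Multiset PBT × Multiset PBT}
    (h : pq ∈ (cD m).support) (hq : pq.2 ≠ 0) : degMon pq.1 < degMon m := by
  have hd := cD_support_deg h
  have : degMon pq.2 ≠ 0 := fun h0 => hq (degMon_eq_zero h0)
  omega

theorem cD_deg_lt_left {m : Multiset PBT} {pq : Multiset PBT × Multiset PBT}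
    (h : pq ∈ (cD m).support) (hp : pq.1 ≠ 0) : degMon pq.2 < degMon m := by
  have hd := cD_support_deg h
  have : degMon pq.1 ≠ 0 := fun h0 => hp (degMon_eq_zero h0)
  omega

/-- the antipode on monomials, defined by the left recursion -/
noncomputable def Sm (m : Multiset PBT) : Halpha :=
  if h0 : m = 0 then 1
  else - ∑ pq ∈ (cD m).support.attach,
    if hq : pq.1.2 = 0 then 0
    else (cD m pq.1) • (Sm pq.1.1 * AddMonoidAlgebra.single pq.1.2 1)
termination_by degMon m
decreasing_by exact cD_deg_lt_right pq.2 hq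

/-- the antipode on monomials, defined by the right recursion -/
noncomputable def Sm' (m : Multiset PBT) : Halpha :=
  if h0 : m = 0 then 1
  else - ∑ pq ∈ (cD m).support.attach,
    if hp : pq.1.1 = 0 then 0
    else (cD m pq.1) • (AddMonoidAlgebra.single pq.1.1 1 * Sm' pq.1.2)
termination_by degMon m
decreasing_by exact cD_deg_lt_left pq.2 hp

noncomputable def Slin : Halpha →ₗ[ℂ] Halpha :=
  Finsupp.lift Halpha ℂ (Multiset PBT) Sm ∘ₗ (AddMonoidAlgebra.coeffLinearEquiv ℂ).toLinearMap

noncomputable def Slin' : Halpha →ₗ[ℂ] Halpha :=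
  Finsupp.lift Halpha ℂ (Multiset PBT) Sm' ∘ₗ (AddMonoidAlgebra.coeffLinearEquiv ℂ).toLinearMap

theorem Slin_single (m : Multiset PBT) (c : ℂ) :
    Slin (AddMonoidAlgebra.single m c) = c • Sm m := by
  rw [Slin, LinearMap.comp_apply, LinearEquiv.coe_coe, AddMonoidAlgebra.coeffLinearEquiv_apply, AddMonoidAlgebra.coeff_single]
  erw [Finsupp.lift_apply, Finsupp.sum_single_index (by simp)]

theorem Slin'_single (m : Multiset PBT) (c : ℂ) :
    Slin' (AddMonoidAlgebra.single m c) = c • Sm' m := by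
  rw [Slin', LinearMap.comp_apply, LinearEquiv.coe_coe, AddMonoidAlgebra.coeffLinearEquiv_apply, AddMonoidAlgebra.coeff_single]
  erw [Finsupp.lift_apply, Finsupp.sum_single_index (by simp)]

theorem one_Halpha : (1 : Halpha) = AddMonoidAlgebra.single 0 1 := rfl

theorem Sm_zero : Sm 0 = 1 := by rw [Sm]; simp

theorem Sm'_zero : Sm' 0 = 1 := by rw [Sm']; simp

theorem key_left (m : Multiset PBT) :
    (LinearMap.mul' ℂ Halpha)
        ((TensorProduct.map Slin LinearMap.id)
          (chargeComul (AddMonoidAlgebra.single m 1))) =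
      algebraMap ℂ Halpha (chargeCounit (AddMonoidAlgebra.single m 1)) := by
  by_cases h0 : m = 0
  · subst h0
    have hcu : chargeCounit (AddMonoidAlgebra.single (0 : Multiset PBT) (1:ℂ)) = 1 := by
      rw [chargeCounit_single]; simp
    have hS1 : Slin (1 : Halpha) = 1 := by
      conv_lhs => rw [one_Halpha]
      rw [Slin_single, one_smul, Sm_zero]
    rw [hcu, map_one, ← one_Halpha, map_one, Algebra.TensorProduct.one_def, map_tmul]
    simp only [LinearMap.id_coe, id_eq]
    rw [hS1, LinearMap.mul'_apply, one_mul]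
  · rw [comul_dec m, map_finsuppSum, map_finsuppSum]
    have he : ((cD m).sum fun pq r =>
        (LinearMap.mul' ℂ Halpha) ((TensorProduct.map Slin LinearMap.id)
          (r • ((AddMonoidAlgebra.single pq.1 1 : Halpha) ⊗ₜ[ℂ]
            (AddMonoidAlgebra.single pq.2 1 : Halpha))))) =
        ∑ pq ∈ (cD m).support, (cD m pq) • (Sm pq.1 * AddMonoidAlgebra.single pq.2 1) := by
      apply Finset.sum_congr rfl
      intro pq _
      show (LinearMap.mul' ℂ Halpha) ((TensorProduct.map Slin LinearMap.id)
        ((cD m pq) • ((AddMonoidAlgebra.single pq.1 1 : Halpha) ⊗ₜ[ℂ]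
          (AddMonoidAlgebra.single pq.2 1 : Halpha)))) = _
      rw [map_smul, map_smul, map_tmul, Slin_single, one_smul]
      simp only [LinearMap.id_coe, id_eq, LinearMap.mul'_apply]
    rw [he]
    -- split the sum along pq.2 = 0
    rw [← Finset.sum_filter_add_sum_filter_not ((cD m).support) (fun pq => pq.2 = 0)]
    have hfil : (cD m).support.filter (fun pq => pq.2 = 0) = {(m, 0)} := by
      apply Finset.ext
      intro pq
      simp only [Finset.mem_filter, Finsupp.mem_support_iff, Finset.mem_singleton]
      constructor
      · rintro ⟨hne, h2⟩
        have : pq = (pq.1, 0) := by rw [← h2]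
        rw [this] at hne ⊢
        rw [cD_right_counit] at hne
        by_cases hh : m = pq.1
        · rw [hh]
        · simp [hh] at hne
      · rintro rfl
        refine ⟨?_, rfl⟩
        rw [cD_right_counit]
        simp
    have hone : ∑ pq ∈ (cD m).support.filter (fun pq => pq.2 = 0),
        (cD m pq) • (Sm pq.1 * AddMonoidAlgebra.single pq.2 1) = Sm m := by
      rw [hfil, Finset.sum_singleton, cD_right_counit, ← one_Halpha]
      simp
    have htwo : ∑ pq ∈ (cD m).support.filter (fun pq => ¬ pq.2 = 0),
        (cD m pq) • (Sm pq.1 * AddMonoidAlgebra.single pq.2 1) = - Sm m := by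
      have hS : Sm m = - ∑ pq ∈ (cD m).support.attach,
          if pq.1.2 = 0 then 0
          else (cD m pq.1) • (Sm pq.1.1 * AddMonoidAlgebra.single pq.1.2 1) := by
        rw [Sm, dif_neg h0]
        congr 1
      rw [Finset.sum_filter]
      have : ∀ pq ∈ (cD m).support,
          (if ¬ pq.2 = 0 then (cD m pq) • (Sm pq.1 * AddMonoidAlgebra.single pq.2 1) else 0) =
          (if pq.2 = 0 then 0 else (cD m pq) • (Sm pq.1 * AddMonoidAlgebra.single pq.2 1)) := by
        intro pq _
        by_cases h : pq.2 = 0 <;> simp [h]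
      rw [Finset.sum_congr rfl this, ← Finset.sum_attach ((cD m).support)
        (fun pq => if pq.2 = 0 then 0 else (cD m pq) • (Sm pq.1 * AddMonoidAlgebra.single pq.2 1))]
      rw [hS, neg_neg]
    rw [hone, htwo, chargeCounit_single, if_neg h0, map_zero, add_neg_cancel]

theorem key_right (m : Multiset PBT) :
    (LinearMap.mul' ℂ Halpha)
        ((TensorProduct.map LinearMap.id Slin')
          (chargeComul (AddMonoidAlgebra.single m 1))) =
      algebraMap ℂ Halpha (chargeCounit (AddMonoidAlgebra.single m 1)) := by
  by_cases h0 : m = 0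
  · subst h0
    have hcu : chargeCounit (AddMonoidAlgebra.single (0 : Multiset PBT) (1:ℂ)) = 1 := by
      rw [chargeCounit_single]; simp
    have hS1 : Slin' (1 : Halpha) = 1 := by
      conv_lhs => rw [one_Halpha]
      rw [Slin'_single, one_smul, Sm'_zero]
    rw [hcu, map_one, ← one_Halpha, map_one, Algebra.TensorProduct.one_def, map_tmul]
    simp only [LinearMap.id_coe, id_eq]
    rw [hS1, LinearMap.mul'_apply, mul_one]
  · rw [comul_dec m, map_finsuppSum, map_finsuppSum]
    have he : ((cD m).sum fun pq r =>
        (LinearMap.mul' ℂ Halpha) ((TensorProduct.map LinearMap.id Slin')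
          (r • ((AddMonoidAlgebra.single pq.1 1 : Halpha) ⊗ₜ[ℂ]
            (AddMonoidAlgebra.single pq.2 1 : Halpha))))) =
        ∑ pq ∈ (cD m).support, (cD m pq) • (AddMonoidAlgebra.single pq.1 1 * Sm' pq.2) := by
      apply Finset.sum_congr rfl
      intro pq _
      show (LinearMap.mul' ℂ Halpha) ((TensorProduct.map LinearMap.id Slin')
        ((cD m pq) • ((AddMonoidAlgebra.single pq.1 1 : Halpha) ⊗ₜ[ℂ]
          (AddMonoidAlgebra.single pq.2 1 : Halpha)))) = _
      rw [map_smul, map_smul, map_tmul, Slin'_single, one_smul]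
      simp only [LinearMap.id_coe, id_eq, LinearMap.mul'_apply]
    rw [he]
    rw [← Finset.sum_filter_add_sum_filter_not ((cD m).support) (fun pq => pq.1 = 0)]
    have hfil : (cD m).support.filter (fun pq => pq.1 = 0) = {(0, m)} := by
      apply Finset.ext
      intro pq
      simp only [Finset.mem_filter, Finsupp.mem_support_iff, Finset.mem_singleton]
      constructor
      · rintro ⟨hne, h1⟩
        have : pq = (0, pq.2) := by rw [← h1]
        rw [this] at hne ⊢
        rw [cD_left_counit] at hne
        by_cases hh : m = pq.2
        · rw [hh]
        · simp [hh] at hne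
      · rintro rfl
        refine ⟨?_, rfl⟩
        rw [cD_left_counit]
        simp
    have hone : ∑ pq ∈ (cD m).support.filter (fun pq => pq.1 = 0),
        (cD m pq) • (AddMonoidAlgebra.single pq.1 1 * Sm' pq.2) = Sm' m := by
      rw [hfil, Finset.sum_singleton, cD_left_counit, ← one_Halpha]
      simp
    have htwo : ∑ pq ∈ (cD m).support.filter (fun pq => ¬ pq.1 = 0),
        (cD m pq) • (AddMonoidAlgebra.single pq.1 1 * Sm' pq.2) = - Sm' m := by
      have hS : Sm' m = - ∑ pq ∈ (cD m).support.attach,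
          if pq.1.1 = 0 then 0
          else (cD m pq.1) • (AddMonoidAlgebra.single pq.1.1 1 * Sm' pq.1.2) := by
        rw [Sm', dif_neg h0]
        congr 1
      rw [Finset.sum_filter]
      have : ∀ pq ∈ (cD m).support,
          (if ¬ pq.1 = 0 then (cD m pq) • (AddMonoidAlgebra.single pq.1 1 * Sm' pq.2) else 0) =
          (if pq.1 = 0 then 0 else (cD m pq) • (AddMonoidAlgebra.single pq.1 1 * Sm' pq.2)) := by
        intro pq _
        by_cases h : pq.1 = 0 <;> simp [h]
      rw [Finset.sum_congr rfl this, ← Finset.sum_attach ((cD m).support)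
        (fun pq => if pq.1 = 0 then 0 else (cD m pq) • (AddMonoidAlgebra.single pq.1 1 * Sm' pq.2))]
      rw [hS, neg_neg]
    rw [hone, htwo, chargeCounit_single, if_neg h0, map_zero, add_neg_cancel]

-- ## Stage 7 : convolution and assembly
set_option synthInstance.maxHeartbeats 1000000
set_option maxHeartbeats 2000000

theorem single_eq_smul (a : Multiset PBT) (b : ℂ) :
    (AddMonoidAlgebra.single a b : Halpha) = b • AddMonoidAlgebra.single a 1 := by
  rw [AddMonoidAlgebra.smul_single', mul_one]

theorem coassoc_all (x : Halpha) :
    (TensorProduct.assoc ℂ Halpha Halpha Halpha)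
        ((TensorProduct.map chargeComul.toLinearMap LinearMap.id) (chargeComul x)) =
      (TensorProduct.map LinearMap.id chargeComul.toLinearMap) (chargeComul x) := by
  have h : (TensorProduct.assoc ℂ Halpha Halpha Halpha).toLinearMap ∘ₗ
      TensorProduct.map chargeComul.toLinearMap LinearMap.id ∘ₗ chargeComul.toLinearMap =
      TensorProduct.map LinearMap.id chargeComul.toLinearMap ∘ₗ chargeComul.toLinearMap := by
    apply AMA_lhom_ext
    intro a b
    simp only [LinearMap.comp_apply, LinearEquiv.coe_coe, AlgHom.toLinearMap_apply]
    show (TensorProduct.assoc ℂ Halpha Halpha Halpha)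
        ((TensorProduct.map chargeComul.toLinearMap LinearMap.id)
          (chargeComul (AddMonoidAlgebra.single a b))) =
      (TensorProduct.map LinearMap.id chargeComul.toLinearMap)
        (chargeComul (AddMonoidAlgebra.single a b))
    rw [single_eq_smul, map_smul, map_smul,
      (TensorProduct.assoc ℂ Halpha Halpha Halpha).map_smul, map_smul,
      coassoc_single]
  have := LinearMap.congr_fun h x
  simpa using this

theorem counit_left_all (x : Halpha) :
    (TensorProduct.lid ℂ Halpha)
        ((TensorProduct.map chargeCounit LinearMap.id) (chargeComul x)) = x := by
  have h : (TensorProduct.lid ℂ Halpha).toLinearMap ∘ₗ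
      TensorProduct.map chargeCounit LinearMap.id ∘ₗ chargeComul.toLinearMap =
      LinearMap.id := by
    apply AMA_lhom_ext
    intro a b
    simp only [LinearMap.comp_apply, LinearEquiv.coe_coe, AlgHom.toLinearMap_apply,
      LinearMap.id_apply]
    show (TensorProduct.lid ℂ Halpha)
        ((TensorProduct.map chargeCounit LinearMap.id)
          (chargeComul (AddMonoidAlgebra.single a b))) = AddMonoidAlgebra.single a b
    rw [single_eq_smul, map_smul, map_smul,
      (TensorProduct.lid ℂ Halpha).map_smul, counit_left_single, ← single_eq_smul]
  have := LinearMap.congr_fun h x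
  simpa using this

theorem counit_right_all (x : Halpha) :
    (TensorProduct.rid ℂ Halpha)
        ((TensorProduct.map LinearMap.id chargeCounit) (chargeComul x)) = x := by
  have h : (TensorProduct.rid ℂ Halpha).toLinearMap ∘ₗ
      TensorProduct.map LinearMap.id chargeCounit ∘ₗ chargeComul.toLinearMap =
      LinearMap.id := by
    apply AMA_lhom_ext
    intro a b
    simp only [LinearMap.comp_apply, LinearEquiv.coe_coe, AlgHom.toLinearMap_apply,
      LinearMap.id_apply]
    show (TensorProduct.rid ℂ Halpha)
        ((TensorProduct.map LinearMap.id chargeCounit)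
          (chargeComul (AddMonoidAlgebra.single a b))) = AddMonoidAlgebra.single a b
    rw [single_eq_smul, map_smul, map_smul,
      (TensorProduct.rid ℂ Halpha).map_smul, counit_right_single, ← single_eq_smul]
  have := LinearMap.congr_fun h x
  simpa using this

noncomputable def eL : Halpha →ₗ[ℂ] Halpha :=
  Algebra.linearMap ℂ Halpha ∘ₗ chargeCounit

noncomputable def conv (f g : Halpha →ₗ[ℂ] Halpha) : Halpha →ₗ[ℂ] Halpha :=
  LinearMap.mul' ℂ Halpha ∘ₗ TensorProduct.map f g ∘ₗ chargeComul.toLinearMap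

theorem conv_apply (f g : Halpha →ₗ[ℂ] Halpha) (x : Halpha) :
    conv f g x = (LinearMap.mul' ℂ Halpha) (TensorProduct.map f g (chargeComul x)) := rfl

theorem key_left_all (x : Halpha) :
    (LinearMap.mul' ℂ Halpha)
        ((TensorProduct.map Slin LinearMap.id) (chargeComul x)) =
      algebraMap ℂ Halpha (chargeCounit x) := by
  have h : LinearMap.mul' ℂ Halpha ∘ₗ
      TensorProduct.map Slin LinearMap.id ∘ₗ chargeComul.toLinearMap = eL := by
    apply AMA_lhom_ext
    intro a b
    simp only [LinearMap.comp_apply, AlgHom.toLinearMap_apply, eL, Algebra.linearMap_apply]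
    show (LinearMap.mul' ℂ Halpha)
        ((TensorProduct.map Slin LinearMap.id)
          (chargeComul (AddMonoidAlgebra.single a b))) =
      algebraMap ℂ Halpha (chargeCounit (AddMonoidAlgebra.single a b))
    rw [single_eq_smul, map_smul, map_smul, map_smul, key_left]
    have hcc : chargeCounit ((b • AddMonoidAlgebra.single a 1 : Halpha)) =
        b * chargeCounit (AddMonoidAlgebra.single a 1) := by
      rw [map_smul, smul_eq_mul]
    rw [hcc, map_mul, ← Algebra.smul_def]
  have := LinearMap.congr_fun h x
  simpa [eL] using this

theorem key_right_all (x : Halpha) :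
    (LinearMap.mul' ℂ Halpha)
        ((TensorProduct.map LinearMap.id Slin') (chargeComul x)) =
      algebraMap ℂ Halpha (chargeCounit x) := by
  have h : LinearMap.mul' ℂ Halpha ∘ₗ
      TensorProduct.map LinearMap.id Slin' ∘ₗ chargeComul.toLinearMap = eL := by
    apply AMA_lhom_ext
    intro a b
    simp only [LinearMap.comp_apply, AlgHom.toLinearMap_apply, eL, Algebra.linearMap_apply]
    show (LinearMap.mul' ℂ Halpha)
        ((TensorProduct.map LinearMap.id Slin')
          (chargeComul (AddMonoidAlgebra.single a b))) =
      algebraMap ℂ Halpha (chargeCounit (AddMonoidAlgebra.single a b))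
    rw [single_eq_smul, map_smul, map_smul, map_smul, key_right]
    have hcc : chargeCounit ((b • AddMonoidAlgebra.single a 1 : Halpha)) =
        b * chargeCounit (AddMonoidAlgebra.single a 1) := by
      rw [map_smul, smul_eq_mul]
    rw [hcc, map_mul, ← Algebra.smul_def]
  have := LinearMap.congr_fun h x
  simpa [eL] using this

theorem conv_S_id : conv Slin LinearMap.id = eL := by
  apply LinearMap.ext
  intro x
  rw [conv_apply, key_left_all]
  simp [eL]

theorem conv_id_S' : conv LinearMap.id Slin' = eL := by
  apply LinearMap.ext
  intro x
  rw [conv_apply, key_right_all]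
  simp [eL]

theorem conv_unit_left (f : Halpha →ₗ[ℂ] Halpha) : conv eL f = f := by
  apply LinearMap.ext
  intro x
  rw [conv_apply]
  have claim : ∀ y : Halpha ⊗[ℂ] Halpha,
      (LinearMap.mul' ℂ Halpha) (TensorProduct.map eL f y) =
        f ((TensorProduct.lid ℂ Halpha)
          ((TensorProduct.map chargeCounit LinearMap.id) y)) := by
    intro y
    induction y with
    | zero => simp
    | add y₁ y₂ h₁ h₂ => rw [map_add, map_add, h₁, h₂, map_add, map_add, map_add]
    | tmul a b =>
      rw [map_tmul, map_tmul]
      simp only [LinearMap.id_coe, id_eq, LinearMap.mul'_apply, eL, LinearMap.comp_apply,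
        Algebra.linearMap_apply, TensorProduct.lid_tmul]
      rw [← Algebra.smul_def, map_smul]
  rw [claim, counit_left_all]

theorem conv_unit_right (f : Halpha →ₗ[ℂ] Halpha) : conv f eL = f := by
  apply LinearMap.ext
  intro x
  rw [conv_apply]
  have claim : ∀ y : Halpha ⊗[ℂ] Halpha,
      (LinearMap.mul' ℂ Halpha) (TensorProduct.map f eL y) =
        f ((TensorProduct.rid ℂ Halpha)
          ((TensorProduct.map LinearMap.id chargeCounit) y)) := by
    intro y
    induction y with
    | zero => simp
    | add y₁ y₂ h₁ h₂ => rw [map_add, map_add, h₁, h₂, map_add, map_add, map_add]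
    | tmul a b =>
      rw [map_tmul, map_tmul]
      simp only [LinearMap.id_coe, id_eq, LinearMap.mul'_apply, eL, LinearMap.comp_apply,
        Algebra.linearMap_apply, TensorProduct.rid_tmul]
      rw [← Algebra.commutes (chargeCounit b) (f a), ← Algebra.smul_def, map_smul]
  rw [claim, counit_right_all]

theorem conv_assoc (f g h : Halpha →ₗ[ℂ] Halpha) :
    conv (conv f g) h = conv f (conv g h) := by
  apply LinearMap.ext
  intro x
  rw [conv_apply, conv_apply]
  have hL : TensorProduct.map (conv f g) h (chargeComul x) =
      TensorProduct.map (LinearMap.mul' ℂ Halpha ∘ₗ TensorProduct.map f g) h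
        (TensorProduct.map chargeComul.toLinearMap LinearMap.id (chargeComul x)) := by
    rw [← LinearMap.comp_apply, ← TensorProduct.map_comp]
    rfl
  have hR : TensorProduct.map f (conv g h) (chargeComul x) =
      TensorProduct.map f (LinearMap.mul' ℂ Halpha ∘ₗ TensorProduct.map g h)
        (TensorProduct.map LinearMap.id chargeComul.toLinearMap (chargeComul x)) := by
    rw [← LinearMap.comp_apply, ← TensorProduct.map_comp]
    rfl
  rw [hL, hR, ← coassoc_all x]
  set w := (TensorProduct.assoc ℂ Halpha Halpha Halpha)
    (TensorProduct.map chargeComul.toLinearMap LinearMap.id (chargeComul x)) with hw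
  have hsymm : TensorProduct.map chargeComul.toLinearMap LinearMap.id (chargeComul x) =
      (TensorProduct.assoc ℂ Halpha Halpha Halpha).symm w := by
    rw [hw, LinearEquiv.symm_apply_apply]
  rw [hsymm]
  generalize w = u
  induction u with
  | zero =>
    rw [(TensorProduct.assoc ℂ Halpha Halpha Halpha).symm.map_zero, map_zero, map_zero,
      map_zero, map_zero]
  | add u₁ u₂ h₁ h₂ =>
    rw [(TensorProduct.assoc ℂ Halpha Halpha Halpha).symm.map_add, map_add, map_add,
      map_add, map_add, h₁, h₂]
  | tmul a y =>
    induction y with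
    | zero =>
      rw [TensorProduct.tmul_zero, (TensorProduct.assoc ℂ Halpha Halpha Halpha).symm.map_zero,
        map_zero, map_zero, map_zero, map_zero]
    | add y₁ y₂ h₁ h₂ =>
      rw [TensorProduct.tmul_add, (TensorProduct.assoc ℂ Halpha Halpha Halpha).symm.map_add,
        map_add, map_add, map_add, map_add, h₁, h₂]
    | tmul b c =>
      rw [TensorProduct.assoc_symm_tmul, map_tmul, map_tmul]
      simp only [LinearMap.comp_apply, LinearMap.mul'_apply, map_tmul, LinearMap.id_coe, id_eq]
      rw [mul_assoc]

theorem S_eq_S' : Slin = Slin' := by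
  have h1 : conv Slin (conv LinearMap.id Slin') = Slin := by
    rw [conv_id_S', conv_unit_right]
  have h2 : conv (conv Slin LinearMap.id) Slin' = Slin' := by
    rw [conv_S_id, conv_unit_left]
  rw [← h1, ← conv_assoc, h2]

end ChargeHopf
/-- The charge coproduct Δ^α is coassociative, and H^α together with Δ^α, the counit ε
(sending ∥ to 1 and every other tree to 0) and an antipode S (the one defined by the
recursion S(t) = −t − Σ S(t₍₁₎)/t₍₂₎) is a graded connected commutative Hopf algebra:
H^α is commutative, Δ^α is a coassociative algebra morphism with counit ε, an antipode
exists, Δ^α respects the grading, and the degree-0 part is spanned by the unit. -/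
theorem charge_hopf_algebra :
    -- commutativity of H^α
    (∀ x y : Halpha, x * y = y * x) ∧
    -- coassociativity of Δ^α
    (∀ x : Halpha,
      (TensorProduct.assoc ℂ Halpha Halpha Halpha)
          ((TensorProduct.map chargeComul.toLinearMap LinearMap.id) (chargeComul x)) =
        (TensorProduct.map LinearMap.id chargeComul.toLinearMap) (chargeComul x)) ∧
    -- counit axioms
    (∀ x : Halpha,
      (TensorProduct.lid ℂ Halpha)
          ((TensorProduct.map chargeCounit LinearMap.id) (chargeComul x)) = x) ∧
    (∀ x : Halpha,
      (TensorProduct.rid ℂ Halpha)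
          ((TensorProduct.map LinearMap.id chargeCounit) (chargeComul x)) = x) ∧
    -- existence of the antipode
    (∃ S : Halpha →ₗ[ℂ] Halpha,
      (∀ x : Halpha,
        (LinearMap.mul' ℂ Halpha)
            ((TensorProduct.map S LinearMap.id) (chargeComul x)) =
          algebraMap ℂ Halpha (chargeCounit x)) ∧
      (∀ x : Halpha,
        (LinearMap.mul' ℂ Halpha)
            ((TensorProduct.map LinearMap.id S) (chargeComul x)) =
          algebraMap ℂ Halpha (chargeCounit x))) ∧
    -- the coproduct is graded
    (∀ m : Multiset PBT,
      chargeComul (AddMonoidAlgebra.single m 1) ∈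
        Submodule.span ℂ {x : Halpha ⊗[ℂ] Halpha |
          ∃ m₁ m₂ : Multiset PBT, degMon m₁ + degMon m₂ = degMon m ∧
            x = AddMonoidAlgebra.single m₁ (1 : ℂ) ⊗ₜ[ℂ] AddMonoidAlgebra.single m₂ 1}) ∧
    -- connectedness: the only monomial of degree 0 is the unit
    (∀ m : Multiset PBT, degMon m = 0 → m = 0) := by
  refine ⟨fun x y => mul_comm x y, ChargeHopf.coassoc_all, ChargeHopf.counit_left_all,
    ChargeHopf.counit_right_all, ⟨ChargeHopf.Slin, ChargeHopf.key_left_all, ?_⟩,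
    ChargeHopf.graded_single, fun m h => ChargeHopf.degMon_eq_zero h⟩
  intro x
  rw [ChargeHopf.S_eq_S']
  exact ChargeHopf.key_right_all x
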